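/- If H ⊑* G and E₁,...,E_k are closed subsets of H, then cl_G(∩_{i=1}^k E_i) = ∩_{i=1}^k cl_G(E_i). -/

import Mathlib

open scoped Classical

/-- A combinatorial pregeometry (matroid) on the ground type `α`, given by a
dimension (rank) function on finite subsets. -/
structure Pregeometry (α : Type*) [DecidableEq α] where
  dim : Finset α → ℕ
  dim_empty : dim ∅ = 0
  dim_le_insert : ∀ (A : Finset α) (x : α), dim A ≤ dim (insert x A)
  insert_le_dim : ∀ (A : Finset α) (x : α), dim (insert x A) ≤ dim A + 1
  submodular : ∀ A B : Finset α, dim (A ∪ B) + dim (A ∩ B) ≤ dim A + dim B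

namespace Pregeometry

variable {α : Type*} [DecidableEq α] (G : Pregeometry α)

/-- Closure of an arbitrary subset. -/
def cl (Y : Set α) : Set α :=
  {x | ∃ A : Finset α, ↑A ⊆ Y ∧ G.dim (insert x A) = G.dim A}

/-- `Y` is closed (in the ambient pregeometry `G`). -/
def IsClosed (Y : Set α) : Prop := G.cl Y = Y

/-- `X` is a closed set of the subpregeometry of `G` induced on `P`
(whose closure operator is `Y ↦ cl Y ∩ P`). -/
def IsClosedIn (P X : Set α) : Prop := X ⊆ P ∧ G.cl X ∩ P = X

/-- Dimension of an arbitrary subset, with value `⊤` when infinite-dimensional. -/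
noncomputable def edim (Y : Set α) : ℕ∞ :=
  ⨆ (A : Finset α) (_ : ↑A ⊆ Y), (G.dim A : ℕ∞)

/-- The (natural number) dimension of a finite-dimensional subset. -/
noncomputable def sdim (Y : Set α) : ℕ := (G.edim Y).toNat

/-- The alternating inclusion–exclusion sum
`Δ_G(Σ) = Σ_{∅ ≠ S ⊆ Σ} (-1)^{|S|+1} d(⋂ S)` of a finite collection of sets. -/
noncomputable def flatSum (Sig : Finset (Set α)) : ℤ :=
  ∑ S ∈ Sig.powerset.filter (· ≠ ∅),
    (-1) ^ (S.card + 1) * (G.sdim (⋂₀ ↑S) : ℤ)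

/-- `P ⊑* Q`: for the subpregeometries induced on `P ⊆ Q`, the dimension of the
intersection of two closed sets of `P` equals the dimension of the intersection
of their closures in `Q` (the closure of `X` in `Q` being `cl X ∩ Q`). -/
def SqStar (P Q : Set α) : Prop := P ⊆ Q ∧
  ∀ X₁ X₂ : Set α, G.IsClosedIn P X₁ → G.IsClosedIn P X₂ →
    G.edim (X₁ ∩ X₂) = G.edim (G.cl X₁ ∩ G.cl X₂ ∩ Q)

/-- `P ⊑ Q`: `P` is strongly embedded in `Q`: for every finite collection `Σ` of
finite-dimensional closed sets of `Q`, `Δ_P(Σ_P) ≤ Δ_Q(Σ)` where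
`Σ_P = {E ∩ P : E ∈ Σ}`. -/
def Sq (P Q : Set α) : Prop := P ⊆ Q ∧
  ∀ Sig : Finset (Set α), (∀ E ∈ Sig, G.IsClosedIn Q E) →
    (∀ E ∈ Sig, G.edim E ≠ ⊤) →
    G.flatSum (Sig.image (· ∩ P)) ≤ G.flatSum Sig

/-- The subpregeometry induced on `P` is flat: every finite collection of
finite-dimensional closed sets satisfies `d(⋃ Σ) ≤ Δ(Σ)`. -/
def FlatIn (P : Set α) : Prop :=
  ∀ Sig : Finset (Set α), (∀ E ∈ Sig, G.IsClosedIn P E) →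
    (∀ E ∈ Sig, G.edim E ≠ ⊤) →
    (G.sdim (⋃₀ ↑Sig) : ℤ) ≤ G.flatSum Sig

/-- The α-function of the subpregeometry of `G` induced on `P`:
`α(X) = |X| − d(X) − Σ_{Y ⊊ X closed} α(Y)`. -/
noncomputable def alphaIn (P : Set α) (X : Finset α) : ℤ :=
  (X.card : ℤ) - (G.dim X : ℤ) -
    ∑ Y ∈ (X.powerset.filter fun Y => Y ≠ X ∧ G.IsClosedIn P ↑Y).attach,
      alphaIn P Y.1
termination_by X.card
decreasing_by
  have h := Y.2
  simp only [Finset.mem_filter, Finset.mem_powerset] at h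
  exact Finset.card_lt_card (lt_of_le_of_ne h.1 h.2.1)

end Pregeometry

/-- A hypergraph on the vertex type `α`: a set of nonempty finite edges. -/
structure Hypergraph' (α : Type*) where
  edges : Set (Finset α)
  nonempty_edges : ∀ e ∈ edges, e ≠ ∅

namespace Hypergraph'

variable {α : Type*} [DecidableEq α] (A : Hypergraph' α)

/-- The set of edges contained in a set of vertices. -/
def edgesIn (P : Set α) : Set (Finset α) := {e | e ∈ A.edges ∧ ↑e ⊆ P}

/-- The predimension `δ(P) = |P| − |R[P]|` of a finite set of vertices. -/
noncomputable def delta (P : Finset α) : ℤ :=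
  (P.card : ℤ) - (A.edgesIn ↑P).ncard

/-- The relative predimension `δ(L/P) = |L∖P| − |R[L∪P]∖R[P]|`. -/
noncomputable def deltaRel (L : Finset α) (P : Set α) : ℤ :=
  ((↑L \ P : Set α).ncard : ℤ) -
    ({e | e ∈ A.edges ∧ ↑e ⊆ ↑L ∪ P ∧ ¬ ↑e ⊆ P} : Set (Finset α)).ncard

/-- `P` is self-sufficient in `A`: `δ(X/P) ≥ 0` for every finite `X`, stated so
as to be meaningful even when infinitely many edges are involved. -/
def SelfSuff (P : Set α) : Prop :=
  ∀ X : Finset α, ∀ Es : Finset (Finset α),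
    (∀ e ∈ Es, e ∈ A.edges ∧ ↑e ⊆ ↑X ∪ P ∧ ¬ ↑e ⊆ P) →
    (Es.card : ℤ) ≤ ((↑X \ P : Set α).ncard : ℤ)

/-- The dimension function associated to a hypergraph:
`d(X) = inf {δ(B) : X ⊆ B finite}`. -/
noncomputable def hdim (X : Finset α) : ℤ :=
  sInf {d : ℤ | ∃ B : Finset α, X ⊆ B ∧ d = A.delta B}

/-- The induced subhypergraph on a set `P` of vertices (keeping `α` as the
ambient vertex type). -/
def restrict (P : Set α) : Hypergraph' α :=
  ⟨{e | e ∈ A.edges ∧ ↑e ⊆ P}, fun e he => A.nonempty_edges e he.1⟩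

/-- A pregeometry `G` is represented by the hypergraph `A` if the associated
dimension function of `A` is the dimension function of `G`. -/
def Represents (G : Pregeometry α) : Prop :=
  ∀ X : Finset α, (G.dim X : ℤ) = A.hdim X

end Hypergraph'

/-! The closure operator of a pregeometry has finite character, so `x ∈ cl X₁ ∩ cl X₂` is
witnessed by finite `A₁ ⊆ X₁`, `A₂ ⊆ X₂`. The sets `Fᵢ = cl Aᵢ ∩ H` are finite-dimensional closed
sets of `H` inside `Xᵢ`, and `⊑*` says that `F₁ ∩ F₂` already has the full dimension of
`cl A₁ ∩ cl A₂ ∋ x`; hence `x` lies in the closure of `F₁ ∩ F₂ ⊆ X₁ ∩ X₂`. Induction on `k` then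
passes from two closed sets to finitely many, closed sets of `H` being stable under intersection. -/

lemma Set.iInter_fin_succ {β : Type*} {k : ℕ} (s : Fin (k + 1) → Set β) :
    ⋂ i, s i = s 0 ∩ ⋂ i : Fin k, s i.succ := by
  ext x
  simp [Fin.forall_fin_succ]

namespace Pregeometry

variable {α : Type*} [DecidableEq α] (G : Pregeometry α)

lemma dim_le_dim_union (A s : Finset α) : G.dim A ≤ G.dim (A ∪ s) := by
  induction s using Finset.induction_on with
  | empty => simp
  | insert a s _ ih =>
    rw [Finset.union_insert]
    exact ih.trans (G.dim_le_insert _ _)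

lemma dim_mono {A B : Finset α} (h : A ⊆ B) : G.dim A ≤ G.dim B := by
  simpa [Finset.union_sdiff_of_subset h] using G.dim_le_dim_union A (B \ A)

lemma subset_cl (Y : Set α) : Y ⊆ G.cl Y :=
  fun y hy => ⟨{y}, by simpa using hy, by simp⟩

lemma cl_univ : G.cl Set.univ = Set.univ :=
  Set.eq_univ_of_univ_subset (G.subset_cl _)

lemma cl_mono {Y Z : Set α} (h : Y ⊆ Z) : G.cl Y ⊆ G.cl Z := by
  rintro x ⟨A, hA, hd⟩
  exact ⟨A, hA.trans h, hd⟩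

lemma mem_cl_finset {A : Finset α} {x : α} (h : G.dim (insert x A) = G.dim A) :
    x ∈ G.cl ↑A :=
  ⟨A, subset_rfl, h⟩

lemma dim_insert_of_mem_cl {A : Finset α} {x : α} (hx : x ∈ G.cl ↑A) :
    G.dim (insert x A) = G.dim A := by
  obtain ⟨A', hA', hd⟩ := hx
  have hsub : A' ⊆ A := Finset.coe_subset.1 hA'
  have hsm := G.submodular (insert x A') A
  rw [Finset.insert_union, Finset.union_eq_right.2 hsub, hd] at hsm
  have := G.dim_mono (Finset.subset_inter (Finset.subset_insert x A') hsub)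
  exact le_antisymm (by omega) (G.dim_le_insert A x)

lemma dim_union_of_subset_cl {A B : Finset α} (h : ↑B ⊆ G.cl ↑A) :
    G.dim (A ∪ B) = G.dim A := by
  induction B using Finset.induction_on with
  | empty => simp
  | insert b B _ ih =>
    have hAB : G.dim (A ∪ B) = G.dim A := ih fun y hy => h (by simp [hy])
    have hb : b ∈ G.cl ↑(A ∪ B) := G.cl_mono (by simp) (h (by simp))
    rw [Finset.union_insert, G.dim_insert_of_mem_cl hb, hAB]

lemma cl_subset_cl_finset {A : Finset α} {Z : Set α} (h : Z ⊆ G.cl ↑A) :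
    G.cl Z ⊆ G.cl ↑A := by
  rintro x ⟨B, hBZ, hd⟩
  have hAB : G.dim (A ∪ B) = G.dim A := G.dim_union_of_subset_cl (hBZ.trans h)
  have hx : G.dim (insert x (A ∪ B)) = G.dim (A ∪ B) :=
    G.dim_insert_of_mem_cl (G.cl_mono (by simp) (G.mem_cl_finset hd))
  have := G.dim_mono (Finset.insert_subset_insert x (Finset.subset_union_left (s₁ := A) (s₂ := B)))
  exact G.mem_cl_finset (le_antisymm (by omega) (G.dim_le_insert A x))

lemma cl_cl_finset_inter {A : Finset α} {H : Set α} (hA : ↑A ⊆ H) :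
    G.cl (G.cl ↑A ∩ H) = G.cl ↑A :=
  (G.cl_subset_cl_finset Set.inter_subset_left).antisymm
    (G.cl_mono (Set.subset_inter (G.subset_cl _) hA))

lemma isClosedIn_cl_finset_inter {A : Finset α} {H : Set α} (hA : ↑A ⊆ H) :
    G.IsClosedIn H (G.cl ↑A ∩ H) :=
  ⟨Set.inter_subset_right, by rw [G.cl_cl_finset_inter hA]⟩

lemma cl_inter_subset_of_isClosedIn {H X Y : Set α} (hX : G.IsClosedIn H X) (hY : Y ⊆ X) :
    G.cl Y ∩ H ⊆ X :=
  hX.2 ▸ Set.inter_subset_inter_left H (G.cl_mono hY)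

lemma isClosedIn_iInter {ι : Sort*} [Nonempty ι] {H : Set α} {X : ι → Set α}
    (hX : ∀ i, G.IsClosedIn H (X i)) : G.IsClosedIn H (⋂ i, X i) := by
  have hsub : (⋂ i, X i) ⊆ H := (Set.iInter_subset X (Classical.arbitrary ι)).trans (hX _).1
  refine ⟨hsub, (Set.subset_iInter fun i => ?_).antisymm
    (Set.subset_inter (G.subset_cl _) hsub)⟩
  exact G.cl_inter_subset_of_isClosedIn (hX i) (Set.iInter_subset X i)

lemma dim_le_edim {A : Finset α} {Y : Set α} (h : ↑A ⊆ Y) : (G.dim A : ℕ∞) ≤ G.edim Y :=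
  le_iSup₂ (f := fun A (_ : ↑A ⊆ Y) => (G.dim A : ℕ∞)) A h

lemma edim_mono {Y Z : Set α} (h : Y ⊆ Z) : G.edim Y ≤ G.edim Z :=
  iSup₂_le fun _ hA => G.dim_le_edim (hA.trans h)

lemma edim_cl_finset_le (A : Finset α) : G.edim (G.cl ↑A) ≤ G.dim A :=
  iSup₂_le fun B hB => by
    have := G.dim_mono (Finset.subset_union_right (s₁ := A) (s₂ := B))
    rw [G.dim_union_of_subset_cl hB] at this
    exact_mod_cast this

lemma exists_finset_dim_eq_edim {Y : Set α} (hY : G.edim Y ≠ ⊤) :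
    ∃ A : Finset α, ↑A ⊆ Y ∧ (G.dim A : ℕ∞) = G.edim Y := by
  have : Nonempty {A : Finset α // ↑A ⊆ Y} := ⟨⟨∅, by simp⟩⟩
  rw [edim, iSup_subtype'] at hY ⊢
  obtain ⟨⟨A, hA⟩, hdim⟩ := ENat.exists_eq_iSup_of_lt_top (lt_top_iff_ne_top.2 hY)
  exact ⟨A, hA, hdim⟩

lemma subset_cl_of_edim_le {Y Z : Set α} (hYZ : Y ⊆ Z) (hdim : G.edim Z ≤ G.edim Y)
    (hY : G.edim Y ≠ ⊤) : Z ⊆ G.cl Y := by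
  intro x hx
  obtain ⟨A, hAY, hA⟩ := G.exists_finset_dim_eq_edim hY
  have hins : ↑(insert x A) ⊆ Z := by
    rw [Finset.coe_insert]
    exact Set.insert_subset hx (hAY.trans hYZ)
  have : (G.dim (insert x A) : ℕ∞) ≤ G.dim A := hA ▸ (G.dim_le_edim hins).trans hdim
  exact ⟨A, hAY, le_antisymm (by exact_mod_cast this) (G.dim_le_insert A x)⟩

lemma cl_inter_of_sqStar {H : Set α} (hH : G.SqStar H Set.univ) {X₁ X₂ : Set α}
    (h₁ : G.IsClosedIn H X₁) (h₂ : G.IsClosedIn H X₂) :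
    G.cl (X₁ ∩ X₂) = G.cl X₁ ∩ G.cl X₂ := by
  refine (Set.subset_inter (G.cl_mono Set.inter_subset_left)
    (G.cl_mono Set.inter_subset_right)).antisymm ?_
  rintro x ⟨⟨A₁, hA₁, hx₁⟩, ⟨A₂, hA₂, hx₂⟩⟩
  have hA₁H := hA₁.trans h₁.1
  have hA₂H := hA₂.trans h₂.1
  have hdim := hH.2 _ _ (G.isClosedIn_cl_finset_inter hA₁H) (G.isClosedIn_cl_finset_inter hA₂H)
  rw [Set.inter_univ, G.cl_cl_finset_inter hA₁H, G.cl_cl_finset_inter hA₂H] at hdim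
  have hfin : G.edim ((G.cl ↑A₁ ∩ H) ∩ (G.cl ↑A₂ ∩ H)) ≠ ⊤ :=
    ne_top_of_le_ne_top (ENat.natCast_ne_top (G.dim A₁))
      ((G.edim_mono (Set.inter_subset_left.trans Set.inter_subset_left)).trans
        (G.edim_cl_finset_le A₁))
  have hsub : (G.cl ↑A₁ ∩ H) ∩ (G.cl ↑A₂ ∩ H) ⊆ G.cl ↑A₁ ∩ G.cl ↑A₂ :=
    Set.inter_subset_inter Set.inter_subset_left Set.inter_subset_left
  refine G.cl_mono (Set.inter_subset_inter (G.cl_inter_subset_of_isClosedIn h₁ hA₁)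
    (G.cl_inter_subset_of_isClosedIn h₂ hA₂)) ?_
  exact G.subset_cl_of_edim_le hsub hdim.ge hfin ⟨G.mem_cl_finset hx₁, G.mem_cl_finset hx₂⟩

end Pregeometry

theorem cl_iInter_of_sqStar_general {α : Type*} [DecidableEq α] (G : Pregeometry α)
    (H : Set α) (hH : G.SqStar H Set.univ) (k : ℕ)
    (E : Fin k → Set α) (hE : ∀ i, G.IsClosedIn H (E i)) :
    G.cl (⋂ i, E i) = ⋂ i, G.cl (E i) := by
  induction k with
  | zero => simp [G.cl_univ]
  | succ k ih =>
    rcases k with _ | k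
    · simp only [Set.iInter_fin_succ, Set.iInter_of_empty, Set.inter_univ]
    · rw [Set.iInter_fin_succ, Set.iInter_fin_succ (fun i => G.cl (E i)),
        G.cl_inter_of_sqStar hH (hE 0) (G.isClosedIn_iInter fun i : Fin (k + 1) => hE i.succ),
        ih (fun i => E i.succ) fun i => hE i.succ]

/-- if `H ⊑* G` and `E₁, …, E_k` are closed in `H`, then
`cl_G(⋂ᵢ Eᵢ) = ⋂ᵢ cl_G(Eᵢ)`. -/
theorem cl_iInter_of_sqStar {α : Type*} [DecidableEq α] (G : Pregeometry α)
    (H : Set α) (hH : G.SqStar H Set.univ) (k : ℕ) (hk : 0 < k)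
    (E : Fin k → Set α) (hE : ∀ i, G.IsClosedIn H (E i)) :
    G.cl (⋂ i, E i) = ⋂ i, G.cl (E i) :=
  cl_iInter_of_sqStar_general G H hH k E hE
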